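/- arXiv:1406.0339 — 4 statements merged into one kernel-verified Lean document; each statement's English description precedes it below -/
import Mathlib

section
/- For every constant σ with 0 < σ < π there exist constants C > 0 and c > 0 (depending only on σ) with the following property. Let H be a finite-dimensional complex Hilbert space with a fixed orthonormal basis ψ_1, …, ψ_m, and let ψ_good and ψ_start be unit vectors in H whose coordinates in this basis are all real, with α := ⟨ψ_good, ψ_start⟩ > 0. Let U_1 and U_2 be unitary transformations of H such that: (1) U_1 ψ_good = −ψ_good and U_1 ψ = ψ for every ψ orthogonal to ψ_good; (2) the matrix of U_2 in the basis ψ_1, …, ψ_m has real entries, U_2 ψ_start = ψ_start, and every eigenvector of U_2 orthogonal to ψ_start has eigenvalue e^{iθ} with θ ∈ [σ, 2π − σ]. Then there exists a natural number t with t ≤ C/α such that |⟨ψ_good, (U_2 U_1)^t ψ_start⟩| ≥ c. -/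
/-!
Let `U = U₂ U₁`, `r = 1 - α` and let `x` solve `x - r U x = ψstart`, so that
`x = ∑ₜ rᵗ Uᵗ ψstart`. As `U₁` is the reflection in `ψgood` and `U₂` fixes `ψstart`, the
solution `w` of `w - r U₂⁻¹ w = ψgood` satisfies `⟨ψgood, x⟩ (1 - r) (2 ⟨w, ψgood⟩ - 1) = α`.
Since `U₂`, `ψgood` and `ψstart` are real, so is `w`; hence `⟨w, ψgood⟩` is real and
`2 ⟨w, ψgood⟩ - 1 = (1 - r²) ‖w‖²`. The spectral gap gives `Re ⟨v, U₂ v⟩ ≤ cos σ ‖v‖²` on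
`ψstart^⊥`, which bounds `‖w‖²` by `1 + 1 / (1 - cos σ)`; with `K = 2 + 2 / (1 - cos σ)` this
yields `|⟨ψgood, x⟩| ≥ 1 / (K α)`. If all amplitudes `|⟨ψgood, Uᵗ ψstart⟩|` with
`t ≤ log (4K) / α` were below `1 / (4K)`, the geometric series would instead give
`|⟨ψgood, x⟩| ≤ 1 / (2K α)`.
-/

open scoped InnerProductSpace ComplexConjugate Real
open Module.End

theorem Real.cos_le_cos_of_le_of_le_two_pi_sub {σ θ : ℝ} (hσ : 0 ≤ σ) (h₁ : σ ≤ θ)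
    (h₂ : θ ≤ 2 * π - σ) : cos θ ≤ cos σ := by
  rcases le_total θ π with hθ | hθ
  · exact cos_le_cos_of_nonneg_of_le_pi hσ hθ h₁
  · rw [← cos_two_pi_sub θ]
    exact cos_le_cos_of_nonneg_of_le_pi hσ (by linarith) (by linarith)

section

variable {𝕜 E : Type*} [RCLike 𝕜] [NormedAddCommGroup E] [InnerProductSpace 𝕜 E]
  [FiniteDimensional 𝕜 E]

theorem LinearMap.IsSymmetric.re_inner_apply_le {T : E →ₗ[𝕜] E} (hT : T.IsSymmetric) {c : ℝ}
    (hc : ∀ μ : ℝ, HasEigenvalue T μ → μ ≤ c) (v : E) :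
    RCLike.re ⟪v, T v⟫_𝕜 ≤ c * ‖v‖ ^ 2 := by
  set e := hT.eigenvectorBasis rfl
  set ev := hT.eigenvalues rfl
  have hcoord : ∀ i, ⟪e i, T v⟫_𝕜 = ev i * ⟪e i, v⟫_𝕜 := fun i => by
    rw [← hT, hT.apply_eigenvectorBasis, inner_smul_left, RCLike.conj_ofReal]
  calc RCLike.re ⟪v, T v⟫_𝕜 = ∑ i, ev i * ‖⟪e i, v⟫_𝕜‖ ^ 2 := by
        rw [← e.sum_inner_mul_inner, map_sum]
        refine Finset.sum_congr rfl fun i _ => ?_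
        rw [hcoord, ← inner_conj_symm, mul_left_comm, RCLike.conj_mul]
        norm_cast
    _ ≤ ∑ i, c * ‖⟪e i, v⟫_𝕜‖ ^ 2 := Finset.sum_le_sum fun i _ =>
        mul_le_mul_of_nonneg_right (hc _ (hT.hasEigenvalue_eigenvalues rfl i)) (sq_nonneg _)
    _ = c * ‖v‖ ^ 2 := by rw [← Finset.mul_sum, e.sum_sq_norm_inner_right]

end

section

variable {E : Type*} [NormedAddCommGroup E] [InnerProductSpace ℂ E]

theorem LinearIsometryEquiv.inner_symm_apply (U : E ≃ₗᵢ[ℂ] E) (x y : E) :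
    ⟪x, U.symm y⟫_ℂ = conj ⟪y, U x⟫_ℂ := by
  rw [← U.inner_map_eq_flip, inner_conj_symm]

theorem LinearIsometryEquiv.symm_apply_eq_conj_smul (U : E ≃ₗᵢ[ℂ] E) {μ : ℂ} {v : E}
    (hv : v ≠ 0) (hUv : U v = μ • v) : U.symm v = conj μ • v := by
  have hμ : ‖μ‖ = 1 := by
    have := U.norm_map v
    rw [hUv, norm_smul] at this
    exact (mul_eq_right₀ (norm_ne_zero_iff.mpr hv)).mp this
  have hμ0 : μ ≠ 0 := by rintro rfl; simp at hμ
  rw [← Complex.inv_eq_conj hμ, U.symm_apply_eq, map_smul, hUv, smul_smul, inv_mul_cancel₀ hμ0,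
    one_smul]

theorem LinearIsometryEquiv.exists_eigenvector_of_hasEigenvalue_add_symm
    [FiniteDimensional ℂ E] (U : E ≃ₗᵢ[ℂ] E) {ν : ℂ}
    (hν : HasEigenvalue ((U : E →ₗ[ℂ] E) + (U.symm : E →ₗ[ℂ] E)) ν) :
    ∃ (μ : ℂ) (v : E), v ≠ 0 ∧ U v = μ • v ∧ ν = ((2 * μ.re : ℝ) : ℂ) := by
  set S : Module.End ℂ E := (U : E →ₗ[ℂ] E) + (U.symm : E →ₗ[ℂ] E)
  have hcomm : Commute S (U : E →ₗ[ℂ] E) := LinearMap.ext fun x => by simp [S]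
  have : Nontrivial (eigenspace S ν) := Submodule.nontrivial_iff_ne_bot.mpr hν
  have hmaps := mapsTo_genEigenspace_of_comm hcomm ν 1
  obtain ⟨μ, hμ⟩ := exists_eigenvalue ((U : E →ₗ[ℂ] E).restrict hmaps)
  obtain ⟨⟨v, hvS⟩, hv⟩ := hμ.exists_hasEigenvector
  have hUv : U v = μ • v := congrArg Subtype.val (mem_eigenspace_iff.mp hv.1)
  have hv0 : v ≠ 0 := by simpa using hv.2
  have hSv : U v + U.symm v = ν • v := mem_eigenspace_iff.mp hvS
  refine ⟨μ, v, hv0, hUv, ?_⟩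
  rw [U.symm_apply_eq_conj_smul hv0 hUv, hUv, ← add_smul, Complex.add_conj] at hSv
  exact (smul_left_injective ℂ hv0 hSv).symm

theorem LinearIsometryEquiv.re_inner_apply_le [FiniteDimensional ℂ E] (U : E ≃ₗᵢ[ℂ] E)
    {c : ℝ} (hc : ∀ (μ : ℂ) (v : E), v ≠ 0 → U v = μ • v → μ.re ≤ c) (v : E) :
    (⟪v, U v⟫_ℂ).re ≤ c * ‖v‖ ^ 2 := by
  -- Mathlib diagonalises only symmetric operators, so we pass to the symmetric `U + U⁻¹`.
  set S : Module.End ℂ E := (U : E →ₗ[ℂ] E) + (U.symm : E →ₗ[ℂ] E)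
  have hS_apply : ∀ x, S x = U x + U.symm x := fun x => rfl
  have hS : S.IsSymmetric := fun x y => by
    rw [hS_apply, hS_apply, inner_add_left, inner_add_right, U.inner_map_eq_flip,
      U.symm.inner_map_eq_flip, LinearIsometryEquiv.symm_symm, add_comm]
  have hSv : (⟪v, S v⟫_ℂ).re = 2 * (⟪v, U v⟫_ℂ).re := by
    rw [hS_apply, inner_add_right, ← U.inner_map_eq_flip, ← inner_conj_symm v, Complex.add_re,
      Complex.conj_re, two_mul]
  have hSc : ∀ ν : ℝ, HasEigenvalue S ν → ν ≤ 2 * c := fun ν hν => by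
    obtain ⟨μ, w, hw, hUw, hνμ⟩ := U.exists_eigenvector_of_hasEigenvalue_add_symm hν
    linarith [Complex.ofReal_injective hνμ, hc μ w hw hUw]
  have := hS.re_inner_apply_le hSc v
  rw [RCLike.re_to_complex, hSv] at this
  linarith

theorem LinearIsometryEquiv.re_inner_apply_le_of_apply_eq_self [FiniteDimensional ℂ E]
    (U : E ≃ₗᵢ[ℂ] E) {s : E} (hUs : U s = s) {c : ℝ}
    (hc : ∀ (μ : ℂ) (v : E), v ≠ 0 → U v = μ • v → ⟪s, v⟫_ℂ = 0 → μ.re ≤ c)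
    {v : E} (hv : ⟪s, v⟫_ℂ = 0) : (⟪v, U v⟫_ℂ).re ≤ c * ‖v‖ ^ 2 := by
  set W := (ℂ ∙ s)ᗮ
  have hW : ∀ w ∈ W, U w ∈ W := fun w hw => by
    rw [Submodule.mem_orthogonal_singleton_iff_inner_right] at hw ⊢
    rw [← hUs, U.inner_map_map, hw]
  let UW : W ≃ₗᵢ[ℂ] W := LinearIsometry.toLinearIsometryEquiv
    { toLinearMap := (U : E →ₗ[ℂ] E).restrict hW, norm_map' := fun w => U.norm_map w } rfl
  exact UW.re_inner_apply_le (fun μ w hw hUw => hc μ w (by simpa using hw)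
    (congrArg Subtype.val hUw) (Submodule.mem_orthogonal_singleton_iff_inner_right.mp w.2))
    ⟨v, Submodule.mem_orthogonal_singleton_iff_inner_right.mpr hv⟩

theorem LinearIsometryEquiv.re_inner_apply_le_cos [FiniteDimensional ℂ E] (U : E ≃ₗᵢ[ℂ] E)
    {s : E} (hUs : U s = s) {σ : ℝ} (hσ : 0 ≤ σ)
    (heig : ∀ (μ : ℂ) (v : E), v ≠ 0 → U v = μ • v → ⟪s, v⟫_ℂ = 0 →
      ∃ θ : ℝ, σ ≤ θ ∧ θ ≤ 2 * π - σ ∧ μ = Complex.exp (θ * Complex.I))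
    {v : E} (hv : ⟪s, v⟫_ℂ = 0) : (⟪v, U v⟫_ℂ).re ≤ Real.cos σ * ‖v‖ ^ 2 :=
  U.re_inner_apply_le_of_apply_eq_self hUs (fun μ w hw hUw hsw => by
    obtain ⟨θ, h₁, h₂, rfl⟩ := heig μ w hw hUw hsw
    rw [Complex.exp_ofReal_mul_I_re]
    exact Real.cos_le_cos_of_le_of_le_two_pi_sub hσ h₁ h₂) hv

theorem LinearIsometry.injective_sub_smul (f : E →ₗᵢ[ℂ] E) {r : ℂ} (hr : ‖r‖ < 1) :
    Function.Injective fun x => x - r • f x := fun x y hxy => by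
  have hfix : x - y = r • f (x - y) := by
    rw [map_sub, smul_sub, sub_eq_sub_iff_sub_eq_sub]; exact hxy
  have hnorm : ‖x - y‖ = ‖r‖ * ‖x - y‖ := by
    conv_lhs => rw [hfix, norm_smul, f.norm_map]
  have : ‖x - y‖ = 0 := by nlinarith [norm_nonneg (x - y)]
  exact sub_eq_zero.mp (norm_eq_zero.mp this)

theorem LinearIsometry.bijective_sub_smul [FiniteDimensional ℂ E] (f : E →ₗᵢ[ℂ] E) {r : ℂ}
    (hr : ‖r‖ < 1) : Function.Bijective fun x => x - r • f x :=
  ⟨f.injective_sub_smul hr,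
    (LinearMap.injective_iff_surjective (f := LinearMap.id - r • f.toLinearMap)).mp
      (f.injective_sub_smul hr)⟩

namespace OrthonormalBasis

variable {ι : Type*} [Fintype ι] (b : OrthonormalBasis ι ℂ E)

noncomputable def coordConj : E →ₗ⋆[ℂ] E where
  toFun z := ∑ i, conj ⟪b i, z⟫_ℂ • b i
  map_add' x y := by simp only [inner_add_right, map_add, add_smul, Finset.sum_add_distrib]
  map_smul' c x := by simp only [inner_smul_right, map_mul, Finset.smul_sum, smul_smul]

theorem inner_coordConj (i : ι) (z : E) : ⟪b i, b.coordConj z⟫_ℂ = conj ⟪b i, z⟫_ℂ :=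
  b.orthonormal.inner_right_fintype _ i

theorem inner_coordConj_coordConj (x y : E) :
    ⟪b.coordConj x, b.coordConj y⟫_ℂ = conj ⟪x, y⟫_ℂ := by
  rw [← b.sum_inner_mul_inner, ← b.sum_inner_mul_inner, map_sum]
  refine Finset.sum_congr rfl fun i _ => ?_
  rw [← inner_conj_symm, inner_coordConj, inner_coordConj, map_mul, ← inner_conj_symm x]

theorem coordConj_eq_self {z : E} (hz : ∀ i, (⟪b i, z⟫_ℂ).im = 0) : b.coordConj z = z := by
  conv_rhs => rw [← b.sum_repr' z]
  exact Finset.sum_congr rfl fun i _ => by rw [Complex.conj_eq_iff_im.mpr (hz i)]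

theorem coordConj_apply_comm {F : Type*} [FunLike F E E] [LinearMapClass F ℂ E E] (U : F)
    (hU : ∀ i j, (⟪b i, U (b j)⟫_ℂ).im = 0) (z : E) :
    b.coordConj (U z) = U (b.coordConj z) := by
  refine InnerProductSpace.ext_inner_left_basis b.toBasis fun i => ?_
  simp only [OrthonormalBasis.coe_toBasis, inner_coordConj]
  conv_lhs => rw [← b.sum_repr' z]
  simp only [coordConj, LinearMap.coe_mk, AddHom.coe_mk, map_sum, map_smul, inner_sum,
    inner_smul_right, map_mul]
  exact Finset.sum_congr rfl fun j _ => by rw [Complex.conj_eq_iff_im.mpr (hU i j)]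

theorem inner_eq_re_of_coordConj_eq_self {x y : E} (hx : b.coordConj x = x)
    (hy : b.coordConj y = y) : ((⟪x, y⟫_ℂ).re : ℂ) = ⟪x, y⟫_ℂ :=
  Complex.conj_eq_iff_re.mp (by rw [← b.inner_coordConj_coordConj, hx, hy])

theorem coordConj_eq_self_of_sub_smul_eq (V : E →ₗᵢ[ℂ] E)
    (hV : ∀ i j, (⟪b i, V (b j)⟫_ℂ).im = 0) {r : ℝ} (hr : |r| < 1) {w g : E}
    (hw : w - (r : ℂ) • V w = g) (hg : b.coordConj g = g) :
    b.coordConj w = w := by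
  refine V.injective_sub_smul (r := r) (by rwa [Complex.norm_real]) ?_
  simp only
  rw [hw, ← b.coordConj_apply_comm V hV, ← Complex.conj_ofReal, ← map_smulₛₗ, ← map_sub, hw, hg]

end OrthonormalBasis

theorem apply_eq_sub_two_inner_smul {F : Type*} [FunLike F E E] [LinearMapClass F ℂ E E]
    (U : F) {g : E} (hg : ‖g‖ = 1) (hUg : U g = -g) (hU : ∀ φ, ⟪g, φ⟫_ℂ = 0 → U φ = φ) (y : E) :
    U y = y - (2 * ⟪g, y⟫_ℂ) • g := by
  have hgg : ⟪g, g⟫_ℂ = 1 := by rw [inner_self_eq_norm_sq_to_K, hg]; norm_num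
  have hperp : U (y - ⟪g, y⟫_ℂ • g) = y - ⟪g, y⟫_ℂ • g :=
    hU _ (by rw [inner_sub_right, inner_smul_right, hgg, mul_one, sub_self])
  calc U y = U (y - ⟪g, y⟫_ℂ • g) + ⟪g, y⟫_ℂ • U g := by
        rw [← map_smul, ← map_add, sub_add_cancel]
    _ = y - (2 * ⟪g, y⟫_ℂ) • g := by rw [hperp, hUg, smul_neg, two_mul, add_smul]; abel

theorem LinearIsometryEquiv.inner_eq_inner_sub_smul_apply (V : E ≃ₗᵢ[ℂ] E) {r : ℝ} {w g : E}
    (hw : w - (r : ℂ) • V.symm w = g) (y : E) : ⟪g, y⟫_ℂ = ⟪w, y - (r : ℂ) • V y⟫_ℂ := by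
  rw [← hw, inner_sub_left, inner_sub_right, inner_smul_left, inner_smul_right,
    Complex.conj_ofReal, V.symm.inner_map_eq_flip, V.symm_symm]

theorem inner_resolvent_mul_eq {U₁ : E → E} (U₂ : E ≃ₗᵢ[ℂ] E) {g s x w : E} {r : ℝ}
    (hg : ‖g‖ = 1) (hU₁ : ∀ y, U₁ y = y - (2 * ⟪g, y⟫_ℂ) • g) (hU₂s : U₂ s = s)
    (hx : x - (r : ℂ) • U₂ (U₁ x) = s) (hw : w - (r : ℂ) • U₂.symm w = g) :
    ⟪g, x⟫_ℂ * ((1 - r) * (2 * ⟪w, g⟫_ℂ - 1)) = ⟪g, s⟫_ℂ := by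
  have hgg : ⟪g, g⟫_ℂ = 1 := by rw [inner_self_eq_norm_sq_to_K, hg]; norm_num
  have hxs : x - (r : ℂ) • U₂ x = s - (2 * r * ⟪g, x⟫_ℂ) • U₂ g := by
    rw [← hx, hU₁, map_sub, map_smul, smul_sub, smul_smul]; ring_nf; abel
  have hgx := U₂.inner_eq_inner_sub_smul_apply hw x
  have hgg' := U₂.inner_eq_inner_sub_smul_apply hw g
  have hgs := U₂.inner_eq_inner_sub_smul_apply hw s
  rw [hxs, inner_sub_right, inner_smul_right] at hgx
  rw [hgg, inner_sub_right, inner_smul_right] at hgg'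
  rw [hU₂s, inner_sub_right, inner_smul_right] at hgs
  linear_combination (1 - (r : ℂ)) * hgx - 2 * (1 - r) * ⟪g, x⟫_ℂ * hgg' - hgs

theorem LinearIsometry.norm_sub_smul_apply_sq (V : E →ₗᵢ[ℂ] E) (r : ℝ) (w : E) :
    ‖w - (r : ℂ) • V w‖ ^ 2 = (1 + r ^ 2) * ‖w‖ ^ 2 - 2 * r * (⟪w, V w⟫_ℂ).re := by
  rw [@norm_sub_sq ℂ, inner_smul_right, norm_smul, V.norm_map, Complex.norm_real,
    Real.norm_eq_abs, mul_pow, sq_abs, RCLike.re_to_complex, Complex.re_ofReal_mul]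
  ring

theorem LinearIsometry.two_re_inner_sub_smul_apply (V : E →ₗᵢ[ℂ] E) (r : ℝ) (w : E) :
    2 * (⟪w, w - (r : ℂ) • V w⟫_ℂ).re = ‖w - (r : ℂ) • V w‖ ^ 2 + (1 - r ^ 2) * ‖w‖ ^ 2 := by
  rw [V.norm_sub_smul_apply_sq, inner_sub_right, inner_smul_right, Complex.sub_re,
    Complex.re_ofReal_mul, ← RCLike.re_to_complex, inner_self_eq_norm_sq]
  ring

theorem norm_sq_eq_norm_inner_sq_add {s : E} (hs : ‖s‖ = 1) (y : E) :
    ‖y‖ ^ 2 = ‖⟪s, y⟫_ℂ‖ ^ 2 + ‖y - ⟪s, y⟫_ℂ • s‖ ^ 2 := by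
  have hss : ⟪s, s⟫_ℂ = 1 := by rw [inner_self_eq_norm_sq_to_K, hs]; norm_num
  have h := norm_add_sq_eq_norm_sq_add_norm_sq_of_inner_eq_zero (𝕜 := ℂ) (⟪s, y⟫_ℂ • s)
    (y - ⟪s, y⟫_ℂ • s) (by rw [inner_smul_left, inner_sub_right, inner_smul_right, hss]; ring)
  rw [add_sub_cancel, norm_smul, hs, mul_one] at h
  simpa only [sq] using h

theorem LinearIsometry.norm_sq_sub_inner_smul_le (V : E →ₗᵢ[ℂ] E) {s : E} (hs : ‖s‖ = 1)
    (hVs : V s = s) {c : ℝ} (hc : ∀ v, ⟪s, v⟫_ℂ = 0 → (⟪v, V v⟫_ℂ).re ≤ c * ‖v‖ ^ 2)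
    {r : ℝ} (hr : 0 ≤ r) (w : E) :
    (1 + r ^ 2 - 2 * r * c) * ‖w - ⟪s, w⟫_ℂ • s‖ ^ 2 ≤ ‖w - (r : ℂ) • V w‖ ^ 2 := by
  have hss : ⟪s, s⟫_ℂ = 1 := by rw [inner_self_eq_norm_sq_to_K, hs]; norm_num
  set p := w - ⟪s, w⟫_ℂ • s
  have hsp : ⟪s, p⟫_ℂ = 0 := by rw [inner_sub_right, inner_smul_right, hss, mul_one, sub_self]
  have hsV : ⟪s, V w⟫_ℂ = ⟪s, w⟫_ℂ := by rw [← V.inner_map_map s w, hVs]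
  have hp : p - (r : ℂ) • V p = (w - (r : ℂ) • V w) - ⟪s, w - (r : ℂ) • V w⟫_ℂ • s := by
    simp only [p, map_sub, map_smul, hVs, inner_sub_right, inner_smul_right, hsV]
    module
  have hcp := hc p hsp
  calc (1 + r ^ 2 - 2 * r * c) * ‖p‖ ^ 2
      ≤ (1 + r ^ 2) * ‖p‖ ^ 2 - 2 * r * (⟪p, V p⟫_ℂ).re := by nlinarith
    _ = ‖p - (r : ℂ) • V p‖ ^ 2 := (V.norm_sub_smul_apply_sq r p).symm
    _ ≤ ‖w - (r : ℂ) • V w‖ ^ 2 := by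
        rw [hp, norm_sq_eq_norm_inner_sq_add hs (w - (r : ℂ) • V w)]
        exact le_add_of_nonneg_left (sq_nonneg _)

theorem LinearIsometry.norm_sq_le_of_sub_smul_eq (V : E →ₗᵢ[ℂ] E) {s : E} (hs : ‖s‖ = 1)
    (hVs : V s = s) {c : ℝ} (hc1 : c < 1)
    (hc : ∀ v, ⟪s, v⟫_ℂ = 0 → (⟪v, V v⟫_ℂ).re ≤ c * ‖v‖ ^ 2) {r : ℝ} (hr : 1 / 2 ≤ r)
    {w g : E} (hw : w - (r : ℂ) • V w = g) (hg : ‖g‖ ≤ 1) :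
    ‖w‖ ^ 2 ≤ ‖⟪s, w⟫_ℂ‖ ^ 2 + 1 / (1 - c) := by
  have hp := V.norm_sq_sub_inner_smul_le hs hVs hc (r := r) (by linarith) w
  rw [hw] at hp
  have hcoef : 1 - c ≤ 1 + r ^ 2 - 2 * r * c := by
    nlinarith [sq_nonneg (1 - r), mul_nonneg (by linarith : 0 ≤ 2 * r - 1) (sub_nonneg.mpr hc1.le)]
  rw [norm_sq_eq_norm_inner_sq_add hs w, add_le_add_iff_left, le_div_iff₀ (sub_pos.mpr hc1)]
  nlinarith [sq_nonneg ‖w - ⟪s, w⟫_ℂ • s‖, pow_le_one₀ (norm_nonneg g) hg (n := 2)]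

theorem norm_inner_resolvent_mul_eq {U₁ : E → E} (U₂ : E ≃ₗᵢ[ℂ] E) {g s x w : E} {r : ℝ}
    (hr0 : 0 ≤ r) (hr1 : r ≤ 1) (hg : ‖g‖ = 1) (hU₁ : ∀ y, U₁ y = y - (2 * ⟪g, y⟫_ℂ) • g)
    (hU₂s : U₂ s = s)
    (hx : x - (r : ℂ) • U₂ (U₁ x) = s) (hw : w - (r : ℂ) • U₂.symm w = g)
    (hwg : ((⟪w, g⟫_ℂ).re : ℂ) = ⟪w, g⟫_ℂ) :
    ‖⟪g, x⟫_ℂ‖ * ((1 - r) * ((1 - r ^ 2) * ‖w‖ ^ 2)) = ‖⟪g, s⟫_ℂ‖ := by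
  have h2wg : 2 * (⟪w, g⟫_ℂ).re - 1 = (1 - r ^ 2) * ‖w‖ ^ 2 := by
    have := U₂.symm.toLinearIsometry.two_re_inner_sub_smul_apply r w
    rw [LinearIsometryEquiv.coe_toLinearIsometry, hw, hg] at this
    linarith
  have hΔ : (1 - (r : ℂ)) * (2 * ⟪w, g⟫_ℂ - 1) = (((1 - r) * ((1 - r ^ 2) * ‖w‖ ^ 2) : ℝ) : ℂ) := by
    rw [← hwg, ← h2wg]; push_cast; ring
  have hΔ0 : 0 ≤ (1 - r) * ((1 - r ^ 2) * ‖w‖ ^ 2) :=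
    mul_nonneg (by linarith) (mul_nonneg (by nlinarith) (sq_nonneg _))
  have := congrArg norm (inner_resolvent_mul_eq U₂ hg hU₁ hU₂s hx hw)
  rwa [hΔ, norm_mul, Complex.norm_real, Real.norm_of_nonneg hΔ0] at this

theorem one_le_mul_norm_inner_resolvent [FiniteDimensional ℂ E] {ι : Type*} [Fintype ι]
    (b : OrthonormalBasis ι ℂ E) {U₁ : E → E} (U₂ : E ≃ₗᵢ[ℂ] E) {g s x : E} {α c : ℝ}
    (hg : ‖g‖ = 1) (hs : ‖s‖ = 1) (hJg : b.coordConj g = g) (hgs : ⟪g, s⟫_ℂ = α)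
    (hα0 : 0 < α) (hα1 : α ≤ 1 / 2) (hc : c < 1) (hU₁ : ∀ y, U₁ y = y - (2 * ⟪g, y⟫_ℂ) • g)
    (hU₂real : ∀ i j, (⟪b i, U₂ (b j)⟫_ℂ).im = 0) (hU₂s : U₂ s = s)
    (hU₂c : ∀ v, ⟪s, v⟫_ℂ = 0 → (⟪v, U₂ v⟫_ℂ).re ≤ c * ‖v‖ ^ 2)
    (hx : x - ((1 - α : ℝ) : ℂ) • U₂ (U₁ x) = s) :
    1 ≤ α * (2 + 2 / (1 - c)) * ‖⟪g, x⟫_ℂ‖ := by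
  set r := 1 - α
  set V := U₂.symm.toLinearIsometry
  have hr : |r| < 1 := by rw [abs_of_nonneg (by linarith)]; linarith
  have hVs : V s = s := U₂.symm_apply_eq.mpr hU₂s.symm
  have hVreal : ∀ i j, (⟪b i, V (b j)⟫_ℂ).im = 0 := fun i j => by
    rw [LinearIsometryEquiv.coe_toLinearIsometry, U₂.inner_symm_apply, Complex.conj_im,
      hU₂real, neg_zero]
  have hVc : ∀ v, ⟪s, v⟫_ℂ = 0 → (⟪v, V v⟫_ℂ).re ≤ c * ‖v‖ ^ 2 := fun v hv => by
    rw [LinearIsometryEquiv.coe_toLinearIsometry, U₂.inner_symm_apply, Complex.conj_re]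
    exact hU₂c v hv
  obtain ⟨w, hw⟩ := (V.bijective_sub_smul (r := r) (by rwa [Complex.norm_real])).surjective g
  replace hw : w - (r : ℂ) • V w = g := hw
  have hsw : ⟪s, w⟫_ℂ = 1 := by
    have h : ⟪s, g⟫_ℂ = (1 - r) * ⟪s, w⟫_ℂ := by
      rw [← hw, inner_sub_right, inner_smul_right, ← V.inner_map_map s w, hVs]; ring
    rw [← inner_conj_symm, hgs, Complex.conj_ofReal] at h
    push_cast [r] at h
    rw [sub_sub_cancel] at h
    exact (mul_eq_left₀ (Complex.ofReal_ne_zero.mpr hα0.ne')).mp h.symm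
  have hw2 : ‖w‖ ^ 2 ≤ 1 + 1 / (1 - c) := by
    simpa [hsw] using V.norm_sq_le_of_sub_smul_eq hs hVs hc hVc (by linarith) hw hg.le
  have hA := norm_inner_resolvent_mul_eq U₂ (by linarith) (by linarith) hg hU₁ hU₂s hx hw
    (b.inner_eq_re_of_coordConj_eq_self
      (b.coordConj_eq_self_of_sub_smul_eq V hVreal hr hw hJg) hJg)
  rw [hgs, Complex.norm_real, Real.norm_of_nonneg hα0.le, sub_sub_cancel, mul_left_comm,
    mul_eq_left₀ hα0.ne'] at hA
  calc 1 = ‖⟪g, x⟫_ℂ‖ * ((1 - r ^ 2) * ‖w‖ ^ 2) := hA.symm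
    _ ≤ ‖⟪g, x⟫_ℂ‖ * (2 * α * (1 + 1 / (1 - c))) := by gcongr; nlinarith
    _ = α * (2 + 2 / (1 - c)) * ‖⟪g, x⟫_ℂ‖ := by ring

theorem LinearIsometry.eq_sum_pow_smul_add (f : E →ₗᵢ[ℂ] E) {r : ℂ} {x s : E}
    (hx : x - r • f x = s) (N : ℕ) :
    x = ∑ t ∈ Finset.range N, r ^ t • (f ^ t) s + r ^ N • (f ^ N) x := by
  induction N with
  | zero => simp
  | succ N ih =>
    have hstep : (f ^ N) x = (f ^ N) s + r • (f ^ (N + 1)) x := by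
      rw [pow_succ, LinearIsometry.coe_mul, Function.comp_apply, ← map_smul, ← map_add, ← hx,
        sub_add_cancel]
    conv_lhs => rw [ih, hstep]
    rw [Finset.sum_range_succ, smul_add, smul_smul, ← pow_succ, add_assoc]

theorem LinearIsometry.norm_le_of_sub_smul_eq (f : E →ₗᵢ[ℂ] E) {r : ℝ} (hr0 : 0 ≤ r)
    (hr1 : r < 1) {x s : E} (hx : x - (r : ℂ) • f x = s) : ‖x‖ ≤ ‖s‖ / (1 - r) := by
  have h : ‖x‖ ≤ ‖s‖ + r * ‖x‖ := by
    calc ‖x‖ = ‖s + (r : ℂ) • f x‖ := by rw [← hx, sub_add_cancel]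
      _ ≤ ‖s‖ + ‖(r : ℂ) • f x‖ := norm_add_le _ _
      _ = ‖s‖ + r * ‖x‖ := by rw [norm_smul, Complex.norm_real, Real.norm_of_nonneg hr0, f.norm_map]
  rw [le_div_iff₀ (by linarith)]
  linarith

theorem LinearIsometry.norm_inner_le_of_sub_smul_eq (f : E →ₗᵢ[ℂ] E) {r : ℝ} (hr0 : 0 ≤ r)
    (hr1 : r < 1) {g s x : E} (hg : ‖g‖ ≤ 1) (hs : ‖s‖ ≤ 1) (hx : x - (r : ℂ) • f x = s)
    {ε : ℝ} (hε : 0 ≤ ε) {N : ℕ} (h : ∀ t < N, ‖⟪g, (f ^ t) s⟫_ℂ‖ ≤ ε) :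
    ‖⟪g, x⟫_ℂ‖ ≤ (ε + r ^ N) / (1 - r) := by
  have h1r : 0 < 1 - r := by linarith
  have hgeom : ∑ t ∈ Finset.range N, r ^ t ≤ 1 / (1 - r) := by
    have := geom_sum_Ico_le_of_lt_one (m := 0) (n := N) hr0 hr1
    rwa [← Finset.range_eq_Ico, pow_zero] at this
  have hrem : ‖⟪g, (f ^ N) x⟫_ℂ‖ ≤ 1 / (1 - r) :=
    calc ‖⟪g, (f ^ N) x⟫_ℂ‖ ≤ ‖g‖ * ‖(f ^ N) x‖ := norm_inner_le_norm _ _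
      _ ≤ ‖s‖ / (1 - r) := by
        rw [LinearIsometry.norm_map]
        exact (mul_le_of_le_one_left (norm_nonneg _) hg).trans (f.norm_le_of_sub_smul_eq hr0 hr1 hx)
      _ ≤ 1 / (1 - r) := by gcongr
  rw [f.eq_sum_pow_smul_add hx N, inner_add_right, inner_sum, inner_smul_right]
  calc _ ≤ ∑ t ∈ Finset.range N, r ^ t * ε + r ^ N * (1 / (1 - r)) := by
        refine (norm_add_le _ _).trans (add_le_add ((norm_sum_le _ _).trans
          (Finset.sum_le_sum fun t ht => ?_)) ?_)
        · rw [inner_smul_right, norm_mul, norm_pow, Complex.norm_real, Real.norm_of_nonneg hr0]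
          exact mul_le_mul_of_nonneg_left (h t (Finset.mem_range.mp ht)) (pow_nonneg hr0 t)
        · rw [norm_mul, norm_pow, Complex.norm_real, Real.norm_of_nonneg hr0]
          exact mul_le_mul_of_nonneg_left hrem (pow_nonneg hr0 N)
    _ ≤ 1 / (1 - r) * ε + r ^ N * (1 / (1 - r)) := by
        rw [← Finset.sum_mul]; gcongr
    _ = (ε + r ^ N) / (1 - r) := by ring

theorem one_sub_pow_le_inv_of_log_le {α y : ℝ} (hα : α ≤ 1) (hy : 0 < y) {N : ℕ}
    (h : Real.log y ≤ α * N) : (1 - α) ^ N ≤ y⁻¹ :=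
  calc (1 - α) ^ N ≤ Real.exp (-α) ^ N :=
        pow_le_pow_left₀ (by linarith) (Real.one_sub_le_exp_neg α) N
    _ = Real.exp (-(α * N)) := by rw [← Real.exp_nat_mul]; ring_nf
    _ ≤ Real.exp (-Real.log y) := Real.exp_le_exp.mpr (by linarith)
    _ = y⁻¹ := by rw [Real.exp_neg, Real.exp_log hy]

theorem LinearIsometry.exists_pow_inner_ge (f : E →ₗᵢ[ℂ] E) {g s x : E} (hg : ‖g‖ ≤ 1)
    (hs : ‖s‖ ≤ 1) {α K : ℝ} (hα0 : 0 < α) (hα1 : α ≤ 1)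
    (hx : x - ((1 - α : ℝ) : ℂ) • f x = s) (hK : 1 ≤ α * K * ‖⟪g, x⟫_ℂ‖) :
    ∃ t : ℕ, (t : ℝ) ≤ Real.log (4 * K) / α ∧ 1 / (4 * K) ≤ ‖⟪g, (f ^ t) s⟫_ℂ‖ := by
  have hr0 : 0 ≤ 1 - α := by linarith
  have hr1 : 1 - α < 1 := by linarith
  have hA : ‖⟪g, x⟫_ℂ‖ ≤ 1 / α := by
    calc ‖⟪g, x⟫_ℂ‖ ≤ ‖g‖ * ‖x‖ := norm_inner_le_norm _ _
      _ ≤ ‖s‖ / (1 - (1 - α)) :=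
        (mul_le_of_le_one_left (norm_nonneg _) hg).trans (f.norm_le_of_sub_smul_eq hr0 hr1 hx)
      _ ≤ 1 / α := by rw [sub_sub_cancel]; gcongr
  have hK1 : 1 ≤ K := by
    have hK0 : 0 < K := by
      by_contra! hK0
      nlinarith [mul_nonneg hα0.le (norm_nonneg ⟪g, x⟫_ℂ)]
    calc 1 ≤ α * K * ‖⟪g, x⟫_ℂ‖ := hK
      _ ≤ α * K * (1 / α) := by gcongr
      _ = K := by field_simp
  by_contra! hcon
  set N := ⌊Real.log (4 * K) / α⌋₊ + 1
  have hlog : 0 ≤ Real.log (4 * K) / α := div_nonneg (Real.log_nonneg (by linarith)) hα0.le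
  have hsmall : ∀ t < N, ‖⟪g, (f ^ t) s⟫_ℂ‖ ≤ 1 / (4 * K) := fun t ht =>
    (hcon t ((Nat.cast_le.mpr (Nat.lt_succ_iff.mp ht)).trans (Nat.floor_le hlog))).le
  have hrN : (1 - α) ^ N ≤ (4 * K)⁻¹ := by
    refine one_sub_pow_le_inv_of_log_le hα1 (by linarith) ?_
    have := Nat.lt_floor_add_one (Real.log (4 * K) / α)
    rw [div_lt_iff₀ hα0] at this
    push_cast [N]
    linarith
  have hup := f.norm_inner_le_of_sub_smul_eq hr0 hr1 hg hs hx (by positivity) hsmall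
  rw [sub_sub_cancel] at hup
  have : α * K * ‖⟪g, x⟫_ℂ‖ ≤ 1 / 2 := by
    calc α * K * ‖⟪g, x⟫_ℂ‖ ≤ α * K * ((1 / (4 * K) + (4 * K)⁻¹) / α) :=
          mul_le_mul_of_nonneg_left (hup.trans (by gcongr)) (mul_nonneg hα0.le (by linarith))
      _ = 1 / 2 := by field_simp; ring
  linarith

end

/-- Ambainis' lemma (Lemma 3 in [Ambainis 2007]). For every constant `σ` with
`0 < σ < π` there are constants `C > 0`, `c > 0` (depending only on `σ`) such that:
for every finite-dimensional complex Hilbert space `ℂ^m` with orthonormal basis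
`ψ`, unit vectors `ψgood`, `ψstart` with real coordinates in this basis and
`α := ⟨ψgood, ψstart⟩ > 0`, and unitaries `U₁`, `U₂` such that
(1) `U₁ ψgood = -ψgood` and `U₁` fixes the orthogonal complement of `ψgood`;
(2) `U₂` has a real matrix in the basis `ψ`, `U₂ ψstart = ψstart`, and every
eigenvector of `U₂` orthogonal to `ψstart` has eigenvalue `e^{iθ}` with
`θ ∈ [σ, 2π - σ]`; then there is `t ≤ C/α` with `|⟨ψgood, (U₂U₁)^t ψstart⟩| ≥ c`. -/
theorem ambainis_amplification (σ : ℝ) (hσ0 : 0 < σ) (hσπ : σ < Real.pi) :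
    ∃ C > (0 : ℝ), ∃ c > (0 : ℝ),
      ∀ (m : ℕ) (ψ : OrthonormalBasis (Fin m) ℂ (EuclideanSpace ℂ (Fin m)))
        (ψgood ψstart : EuclideanSpace ℂ (Fin m))
        (U₁ U₂ : EuclideanSpace ℂ (Fin m) ≃ₗᵢ[ℂ] EuclideanSpace ℂ (Fin m)),
        ‖ψgood‖ = 1 → ‖ψstart‖ = 1 →
        (∀ j, (inner ℂ (ψ j) ψgood : ℂ).im = 0) →
        (∀ j, (inner ℂ (ψ j) ψstart : ℂ).im = 0) →
        0 < (inner ℂ ψgood ψstart : ℂ).re →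
        U₁ ψgood = -ψgood →
        (∀ φ : EuclideanSpace ℂ (Fin m), (inner ℂ ψgood φ : ℂ) = 0 → U₁ φ = φ) →
        (∀ i j, (inner ℂ (ψ i) (U₂ (ψ j)) : ℂ).im = 0) →
        U₂ ψstart = ψstart →
        (∀ (μ : ℂ) (v : EuclideanSpace ℂ (Fin m)), v ≠ 0 → U₂ v = μ • v →
          (inner ℂ ψstart v : ℂ) = 0 →
          ∃ θ : ℝ, σ ≤ θ ∧ θ ≤ 2 * Real.pi - σ ∧ μ = Complex.exp (θ * Complex.I)) →
        ∃ t : ℕ, (t : ℝ) ≤ C / (inner ℂ ψgood ψstart : ℂ).re ∧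
          c ≤ ‖(inner ℂ ψgood ((fun x => U₂ (U₁ x))^[t] ψstart) : ℂ)‖ := by
  have hcos : Real.cos σ < 1 := by
    simpa using Real.cos_lt_cos_of_nonneg_of_le_pi le_rfl hσπ.le hσ0
  set K := 2 + 2 / (1 - Real.cos σ)
  have hK : 2 < K := by have := div_pos two_pos (sub_pos.mpr hcos); linarith
  refine ⟨Real.log (4 * K), Real.log_pos (by linarith), 1 / (4 * K), by positivity, ?_⟩
  intro m ψ g s U₁ U₂ hg hs hgreal hsreal hα hU₁g hU₁perp hU₂real hU₂s heig
  set α := (⟪g, s⟫_ℂ).re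
  rcases le_or_gt (1 / (4 * K)) α with hαbig | hαsmall
  · exact ⟨0, by simpa using div_nonneg (Real.log_pos (by linarith)).le hα.le,
      hαbig.trans (Complex.re_le_norm _)⟩
  have hα1 : α ≤ 1 / 2 := hαsmall.le.trans (by gcongr; linarith)
  have hJg := ψ.coordConj_eq_self hgreal
  have hgs : ⟪g, s⟫_ℂ = α :=
    (ψ.inner_eq_re_of_coordConj_eq_self hJg (ψ.coordConj_eq_self hsreal)).symm
  set f := (U₁.trans U₂).toLinearIsometry
  obtain ⟨x, hx⟩ := (f.bijective_sub_smul (r := ((1 - α : ℝ) : ℂ))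
    (by rw [Complex.norm_real, Real.norm_of_nonneg (by linarith)]; linarith)).surjective s
  have hlow := one_le_mul_norm_inner_resolvent ψ U₂ hg hs hJg hgs hα hα1 hcos
    (apply_eq_sub_two_inner_smul U₁ hg hU₁g hU₁perp) hU₂real hU₂s
    (fun v => U₂.re_inner_apply_le_cos hU₂s hσ0.le heig) hx
  obtain ⟨t, ht, hamp⟩ := f.exists_pow_inner_ge hg.le hs.le hα (by linarith) hx hlow
  exact ⟨t, ht, by rwa [LinearIsometry.coe_pow] at hamp⟩
end

section
/- Let H be a finite-dimensional complex Hilbert space and let S and C be unitary linear maps on H that are involutions, i.e. S∘S = id and C∘C = id. Then the fixed subspace of the composition S∘C decomposes as an (internal, orthogonal) direct sum: ker(S∘C − id) = (ker(S − id) ⊓ ker(C − id)) ⊕ (ker(S + id) ⊓ ker(C + id)). In particular, every 1-eigenvector of S∘C is a sum of a common 1-eigenvector of S and C and a common (−1)-eigenvector of S and C. -/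
/-!
If `S (C x) = x`, then applying the involution `S` gives `C x = S x`, so
`2 • x = (x + C x) + (x - C x)` splits `x` into a vector fixed by both `S` and `C` and one
negated by both. The two pieces are orthogonal because `S` preserves inner products:
`⟪x, y⟫ = ⟪S x, S y⟫ = -⟪x, y⟫`.
-/

namespace LinearMap

variable {R M : Type*} [Ring R] [AddCommGroup M] [Module R M]

theorem mem_ker_sub_one {f : M →ₗ[R] M} {x : M} : x ∈ ker (f - 1) ↔ f x = x := by
  simp [sub_eq_zero]

theorem mem_ker_add_one {f : M →ₗ[R] M} {x : M} : x ∈ ker (f + 1) ↔ f x = -x := by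
  simp [add_eq_zero_iff_eq_neg]

theorem ker_mul_sub_one_of_mul_self_eq_one [Invertible (2 : R)] {S C : M →ₗ[R] M}
    (hS : S * S = 1) (hC : C * C = 1) :
    ker (S * C - 1) = (ker (S - 1) ⊓ ker (C - 1)) ⊔ (ker (S + 1) ⊓ ker (C + 1)) := by
  have hSS (x : M) : S (S x) = x := congr($hS x)
  have hCC (x : M) : C (C x) = x := congr($hC x)
  refine le_antisymm (fun x hx ↦ ?_) (sup_le (fun x hx ↦ ?_) (fun x hx ↦ ?_))
  · rw [mem_ker_sub_one, Module.End.mul_apply] at hx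
    have hCS : C x = S x := (hSS (C x)).symm.trans (congrArg S hx)
    have hplus : x + C x ∈ ker (S - 1) ⊓ ker (C - 1) :=
      ⟨mem_ker_sub_one.2 (by rw [map_add, hx, ← hCS, add_comm]),
        mem_ker_sub_one.2 (by rw [map_add, hCC, add_comm])⟩
    have hminus : x - C x ∈ ker (S + 1) ⊓ ker (C + 1) :=
      ⟨mem_ker_add_one.2 (by rw [map_sub, hx, ← hCS, neg_sub]),
        mem_ker_add_one.2 (by rw [map_sub, hCC, neg_sub])⟩
    have htwo : (2 : R) • x = (x + C x) + (x - C x) := by rw [two_smul]; abel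
    rw [← Submodule.smul_mem_iff'' (r := (2 : R)), htwo]
    exact Submodule.add_mem_sup hplus hminus
  · obtain ⟨hxS, hxC⟩ := Submodule.mem_inf.1 hx
    rw [mem_ker_sub_one] at hxS hxC ⊢
    rw [Module.End.mul_apply, hxC, hxS]
  · obtain ⟨hxS, hxC⟩ := Submodule.mem_inf.1 hx
    rw [mem_ker_add_one] at hxS hxC
    rw [mem_ker_sub_one, Module.End.mul_apply, hxC, map_neg, hxS, neg_neg]

end LinearMap

theorem inner_eq_zero_of_mem_ker_sub_one_of_mem_ker_add_one {𝕜 E : Type*} [RCLike 𝕜]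
    [SeminormedAddCommGroup E] [InnerProductSpace 𝕜 E] {S : E →ₗ[𝕜] E}
    (hS : ∀ x y, inner 𝕜 (S x) (S y) = inner 𝕜 x y) {x y : E}
    (hx : x ∈ LinearMap.ker (S - 1)) (hy : y ∈ LinearMap.ker (S + 1)) : inner 𝕜 x y = 0 := by
  have h := hS x y
  rw [LinearMap.mem_ker_sub_one.1 hx, LinearMap.mem_ker_add_one.1 hy, inner_neg_right] at h
  exact CharZero.eq_neg_self_iff.1 h.symm

theorem fixed_space_of_product_of_involutions_general
    {H : Type*} [NormedAddCommGroup H] [InnerProductSpace ℂ H]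
    (S C : H →ₗ[ℂ] H)
    (hSunitary : ∀ x y : H, (inner ℂ (S x) (S y) : ℂ) = inner ℂ x y)
    (hS2 : S * S = 1) (hC2 : C * C = 1) :
    LinearMap.ker (S * C - 1) =
      (LinearMap.ker (S - 1) ⊓ LinearMap.ker (C - 1)) ⊔
        (LinearMap.ker (S + 1) ⊓ LinearMap.ker (C + 1)) ∧
    ∀ x ∈ LinearMap.ker (S - 1) ⊓ LinearMap.ker (C - 1),
      ∀ y ∈ LinearMap.ker (S + 1) ⊓ LinearMap.ker (C + 1),
        (inner ℂ x y : ℂ) = 0 :=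
  ⟨LinearMap.ker_mul_sub_one_of_mul_self_eq_one hS2 hC2, fun _ hx _ hy ↦
    inner_eq_zero_of_mem_ker_sub_one_of_mem_ker_add_one hSunitary hx.1 hy.1⟩

/-- Let `S` and `C` be unitary involutions on a finite-dimensional complex Hilbert
space `H`. Then the fixed subspace of `S ∘ C` decomposes as the internal orthogonal
direct sum `ker(SC - 1) = (ker(S-1) ⊓ ker(C-1)) ⊕ (ker(S+1) ⊓ ker(C+1))`:
the subspace equals the (lattice) sup of the two intersections, and the two
intersections are mutually orthogonal. -/
theorem fixed_space_of_product_of_involutions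
    {H : Type*} [NormedAddCommGroup H] [InnerProductSpace ℂ H] [FiniteDimensional ℂ H]
    (S C : H →ₗ[ℂ] H)
    (hSunitary : ∀ x y : H, (inner ℂ (S x) (S y) : ℂ) = inner ℂ x y)
    (hCunitary : ∀ x y : H, (inner ℂ (C x) (C y) : ℂ) = inner ℂ x y)
    (hS2 : S * S = 1) (hC2 : C * C = 1) :
    LinearMap.ker (S * C - 1) =
      (LinearMap.ker (S - 1) ⊓ LinearMap.ker (C - 1)) ⊔
        (LinearMap.ker (S + 1) ⊓ LinearMap.ker (C + 1)) ∧
    ∀ x ∈ LinearMap.ker (S - 1) ⊓ LinearMap.ker (C - 1),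
      ∀ y ∈ LinearMap.ker (S + 1) ⊓ LinearMap.ker (C + 1),
        (inner ℂ x y : ℂ) = 0 :=
  fixed_space_of_product_of_involutions_general S C hSunitary hS2 hC2
end

section
/- Let G be a finite connected simple graph with at least one edge. A vector f in the walk space satisfies S f = f and C f = f (where S is the shift operator and C is the Grover coin operator) if and only if f is a constant multiple of the uniform state ψ_start. In other words, the common fixed space of S and C is one-dimensional and is spanned by the equal superposition over all directed edges. -/
open Finset

variable {V : Type*} [Fintype V] [DecidableEq V]

/-- The shift operator on the walk space of directed edges (represented as
functions `V → V → ℂ`): `(Sf)(j,i) = f(i,j)`. -/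
def shiftOp (f : V → V → ℂ) : V → V → ℂ := fun j i => f i j

/-- The Grover coin operator on the walk space:
`(Cf)(j,i) = (2/deg i) Σ_{k ~ i} f(k,i) − f(j,i)`. -/
noncomputable def groverCoin (G : SimpleGraph V) [DecidableRel G.Adj]
    (f : V → V → ℂ) : V → V → ℂ :=
  fun j i => (2 : ℂ) / (G.degree i : ℂ) * (∑ k ∈ G.neighborFinset i, f k i) - f j i

/-- The uniform initial state: the constant value `1/√(2E)` on the set of directed
edges (and `0` on non-adjacent pairs), where `E` is the number of edges of `G`. -/
noncomputable def psiStart (G : SimpleGraph V) [DecidableRel G.Adj] :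
    V → V → ℂ :=
  fun j i => if G.Adj j i then (1 : ℂ) / (Real.sqrt (2 * G.edgeFinset.card) : ℂ) else 0

/-- Let `G` be a finite connected simple graph with at least one edge. A vector `f`
in the walk space (a function on pairs supported on the directed edges) satisfies
`S f = f` and `C f = f` if and only if `f` is a constant multiple of the uniform
state `ψ_start`: the common fixed space of `S` and `C` is spanned by the equal
superposition over all directed edges. -/
theorem common_fixed_space_eq_span_uniform
    (G : SimpleGraph V) [DecidableRel G.Adj]
    (hconn : G.Connected) (hE : 0 < G.edgeFinset.card)
    (f : V → V → ℂ) (hsupp : ∀ j i : V, ¬G.Adj j i → f j i = 0) :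
    ((∀ ⦃j i : V⦄, G.Adj j i → shiftOp f j i = f j i) ∧
     (∀ ⦃j i : V⦄, G.Adj j i → groverCoin G f j i = f j i)) ↔
      ∃ c : ℂ, f = c • psiStart G := by
  have hv : (Real.sqrt (2 * G.edgeFinset.card) : ℂ) ≠ 0 := by
    have h0 : (0:ℝ) < Real.sqrt (2 * G.edgeFinset.card) :=
      Real.sqrt_pos.mpr (by positivity)
    exact_mod_cast h0.ne'
  constructor
  · rintro ⟨hS, hC⟩
    have hone : ∀ {j j' i : V}, G.Adj j i → G.Adj j' i → f j i = f j' i := by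
      intro j j' i hji hj'i
      have h1 := hC hji
      have h2 := hC hj'i
      simp only [groverCoin] at h1 h2
      linear_combination (h2 - h1) / 2
    have hsym : ∀ {j i : V}, G.Adj j i → f i j = f j i := by
      intro j i hji
      have := hS hji
      simpa [shiftOp] using this
    have hwalk : ∀ {a b : V} (p : G.Walk a b) {ja jb : V},
        G.Adj ja a → G.Adj jb b → f ja a = f jb b := by
      intro a b p
      induction p with
      | nil => intro ja jb h1 h2; exact hone h1 h2
      | @cons u v w h p ih =>
        intro ja jb h1 h2
        calc f ja u = f v u := hone h1 h.symm
          _ = f u v := (hsym h.symm).symm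
          _ = f jb w := ih h h2
    obtain ⟨j0, i0, h0⟩ : ∃ a b, G.Adj a b := by
      obtain ⟨e, he⟩ := Finset.card_pos.mp hE
      revert he
      induction e using Sym2.ind with
      | _ a b => intro he; exact ⟨a, b, by simpa using he⟩
    refine ⟨f j0 i0 * (Real.sqrt (2 * G.edgeFinset.card) : ℂ), ?_⟩
    funext j i
    by_cases hji : G.Adj j i
    · have hfw : f j0 i0 = f j i := hwalk ((hconn i0 i).some) h0 hji
      simp only [Pi.smul_apply, psiStart, hji, if_true, smul_eq_mul]
      rw [mul_one_div, mul_div_assoc, div_self hv, mul_one, hfw]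
    · simp [hsupp j i hji, psiStart, hji]
  · rintro ⟨c, rfl⟩
    set v : ℂ := (1 : ℂ) / (Real.sqrt (2 * G.edgeFinset.card) : ℂ) with hvdef
    constructor
    · intro j i hji
      simp [shiftOp, psiStart, hji, hji.symm]
    · intro j i hji
      have hd : (G.degree i : ℂ) ≠ 0 := by
        have : 0 < G.degree i := G.degree_pos_iff_exists_adj i |>.mpr ⟨j, hji.symm⟩
        exact_mod_cast this.ne'
      have hsum : (∑ k ∈ G.neighborFinset i, (c • psiStart G) k i)
          = (G.degree i : ℂ) * (c * v) := by
        rw [show (G.degree i : ℂ) * (c * v) = ∑ _k ∈ G.neighborFinset i, (c * v) by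
          rw [Finset.sum_const, SimpleGraph.card_neighborFinset_eq_degree]; ring]
        refine Finset.sum_congr rfl fun k hk => ?_
        have hk' : G.Adj k i := (SimpleGraph.mem_neighborFinset _ _ _).mp hk |>.symm
        simp [psiStart, hk', hvdef]
      simp only [groverCoin, hsum]
      have hpsi : (c • psiStart G) j i = c * v := by simp [psiStart, hji, hvdef]
      rw [hpsi]
      field_simp
      ring
end

section
/- Let G be a finite connected simple graph with at least one edge, and let f be a vector in the walk space with S(C f) = f (a 1-eigenvector of the walk operator SC) that is orthogonal to the uniform state ψ_start. Then for every vertex m: f is orthogonal to the target state t_m, and S(C(O_m f)) = f, where O_m is the oracle operator that flips the sign of the component of a vector along t_m (i.e. O_m g = g − 2⟨t_m, g⟩·t_m). In particular, the subspace ker(SC − id) ∩ {ψ_start}^⊥ is invariant under the search operator S∘C∘O_m for every m. -/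
/-!
If `S C f = f`, the equations at the edges `(j,i)` and `(i,j)` both express `f(i,j) + f(j,i)`,
once as `(2 / deg j) σ_j` and once as `(2 / deg i) σ_i`, where `σ_i = Σ_{k ~ i} f(k,i)` is the
inflow at `i`. So `σ_i / deg i` is constant along edges, and on a connected graph `σ_i = c deg i`.
Both `ψ_start` and `t_m` are constant on the edges entering each vertex, which gives
`⟨ψ_start, f⟩ = Σ_i σ_i / √(2E) = 2cE / √(2E)` and `⟨t_m, f⟩ = σ_m / √(deg m)`.
Orthogonality to `ψ_start` forces `c = 0`, hence `f ⊥ t_m`, so `O_m f = f`.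
-/

open Finset

variable {V : Type*} [Fintype V] [DecidableEq V]

/-- The target state of node `m`: `t_m(j,m) = 1/√(deg m)` for `j` adjacent to `m`,
and `t_m(j,i) = 0` otherwise. -/
noncomputable def targetState (G : SimpleGraph V) [DecidableRel G.Adj]
    (m : V) : V → V → ℂ :=
  fun j i => if i = m ∧ G.Adj j m then (1 : ℂ) / (Real.sqrt (G.degree m) : ℂ) else 0

/-- The inner product on the walk space: `⟨f,g⟩ = Σ_{(j,i) : i ~ j} conj(f j i) * g j i`. -/
noncomputable def walkInner (G : SimpleGraph V) [DecidableRel G.Adj]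
    (f g : V → V → ℂ) : ℂ :=
  ∑ j, ∑ i, if G.Adj j i then (starRingEnd ℂ) (f j i) * g j i else 0

/-- The oracle operator `O_m`, flipping the sign of the component along the target
state `t_m`: `O_m g = g − 2⟨t_m, g⟩ t_m`. -/
noncomputable def oracleOp (G : SimpleGraph V) [DecidableRel G.Adj]
    (m : V) (g : V → V → ℂ) : V → V → ℂ :=
  fun j i => g j i - 2 * walkInner G (targetState G m) g * targetState G m j i

theorem SimpleGraph.Reachable.apply_eq_of_forall_adj {W α : Type*} {G : SimpleGraph W}
    {φ : W → α} (hφ : ∀ ⦃u v⦄, G.Adj u v → φ u = φ v) {u v : W} (huv : G.Reachable u v) :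
    φ u = φ v := by
  obtain ⟨p⟩ := huv
  induction p with
  | nil => rfl
  | cons hadj _ ih => exact (hφ hadj).trans ih

section WalkSpace

variable {G : SimpleGraph V} [DecidableRel G.Adj]

variable (G) in
noncomputable def inflow (f : V → V → ℂ) (i : V) : ℂ := ∑ k ∈ G.neighborFinset i, f k i

omit [DecidableEq V] in
theorem walkInner_eq_sum_inflow {g : V → V → ℂ} {a : V → ℂ}
    (hg : ∀ ⦃j i⦄, G.Adj j i → g j i = a i) (f : V → V → ℂ) :
    walkInner G g f = ∑ i, starRingEnd ℂ (a i) * inflow G f i := by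
  rw [walkInner, Finset.sum_comm]
  refine Finset.sum_congr rfl fun i _ => ?_
  have hnbr : G.neighborFinset i = ({j | G.Adj j i} : Finset V) := by
    ext; simp [SimpleGraph.adj_comm]
  rw [inflow, hnbr, Finset.mul_sum, Finset.sum_filter]
  refine Finset.sum_congr rfl fun j _ => ?_
  split_ifs with h
  · rw [hg h]
  · rfl

omit [DecidableEq V] in
theorem walkInner_psiStart (f : V → V → ℂ) :
    walkInner G (psiStart G) f =
      (1 / (Real.sqrt (2 * G.edgeFinset.card) : ℂ)) * ∑ i, inflow G f i := by
  rw [walkInner_eq_sum_inflow (g := psiStart G)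
    (a := fun _ => 1 / (Real.sqrt (2 * G.edgeFinset.card) : ℂ)) fun j i h => if_pos h,
    Finset.mul_sum]
  simp only [map_div₀, map_one, Complex.conj_ofReal]

theorem walkInner_targetState (m : V) (f : V → V → ℂ) :
    walkInner G (targetState G m) f = (1 / (Real.sqrt (G.degree m) : ℂ)) * inflow G f m := by
  rw [walkInner_eq_sum_inflow
    (a := fun i => if i = m then 1 / (Real.sqrt (G.degree m) : ℂ) else 0)
    fun j i h => by
      by_cases him : i = m
      · subst him; simp [targetState, h]
      · simp [targetState, him]]
  simp only [apply_ite (starRingEnd ℂ), map_div₀, map_one, Complex.conj_ofReal, map_zero,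
    ite_mul, zero_mul, Finset.sum_ite_eq', Finset.mem_univ, if_true]

theorem oracleOp_eq_self {m : V} {f : V → V → ℂ} (hf : walkInner G (targetState G m) f = 0) :
    oracleOp G m f = f := by
  funext j i
  simp [oracleOp, hf]

omit [DecidableEq V] in
theorem add_eq_inflow_of_shiftOp_groverCoin {f : V → V → ℂ} {j i : V}
    (hfix : shiftOp (groverCoin G f) j i = f j i) :
    f i j + f j i = 2 / (G.degree j : ℂ) * inflow G f j := by
  rw [← hfix]
  simp only [shiftOp, groverCoin, inflow]
  ring

omit [DecidableEq V] in
theorem inflow_eq_mul_degree_of_connected (hconn : G.Connected) {f : V → V → ℂ}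
    (hfix : ∀ ⦃j i : V⦄, G.Adj j i → shiftOp (groverCoin G f) j i = f j i) :
    ∃ c : ℂ, ∀ i, inflow G f i = c * G.degree i := by
  have hratio : ∀ ⦃j i⦄, G.Adj j i →
      inflow G f j / G.degree j = inflow G f i / G.degree i := fun j i h => by
    linear_combination (add_eq_inflow_of_shiftOp_groverCoin (hfix h.symm) -
      add_eq_inflow_of_shiftOp_groverCoin (hfix h)) / 2
  obtain ⟨v⟩ := hconn.nonempty
  refine ⟨inflow G f v / G.degree v, fun i => ?_⟩
  rw [← (hconn i v).apply_eq_of_forall_adj hratio]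
  rcases eq_or_ne (G.degree i) 0 with h0 | h0
  · rw [inflow, Finset.card_eq_zero.mp ((G.card_neighborFinset_eq_degree i).trans h0)]
    simp [h0]
  · exact (div_mul_cancel₀ _ (Nat.cast_ne_zero.mpr h0)).symm

omit [DecidableEq V] in
theorem inflow_eq_zero_of_connected (hconn : G.Connected) (hE : 0 < G.edgeFinset.card)
    {f : V → V → ℂ}
    (hfix : ∀ ⦃j i : V⦄, G.Adj j i → shiftOp (groverCoin G f) j i = f j i)
    (horth : walkInner G (psiStart G) f = 0) (i : V) :
    inflow G f i = 0 := by
  obtain ⟨c, hc⟩ := inflow_eq_mul_degree_of_connected hconn hfix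
  have hE' : (G.edgeFinset.card : ℂ) ≠ 0 := Nat.cast_ne_zero.mpr hE.ne'
  have hsum : ∑ i, inflow G f i = c * (2 * G.edgeFinset.card) := by
    simp_rw [hc, ← Finset.mul_sum]
    congr 1
    exact_mod_cast G.sum_degrees_eq_twice_card_edges
  have hsum0 : ∑ i, inflow G f i = 0 := by
    rw [walkInner_psiStart] at horth
    refine (mul_eq_zero.mp horth).resolve_left (one_div_ne_zero ?_)
    exact_mod_cast (Real.sqrt_pos.mpr (by positivity)).ne'
  have hc0 : c = 0 := by
    simpa [hE'] using hsum.symm.trans hsum0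
  rw [hc, hc0, zero_mul]

end WalkSpace

/-- Let `G` be a finite connected simple graph with at least one edge and let `f` be
a `1`-eigenvector of the walk operator `SC` orthogonal to the uniform state
`ψ_start`. Then for every vertex `m`: `f` is orthogonal to the target state `t_m`,
and `S(C(O_m f)) = f`; in particular `ker(SC − 1) ∩ {ψ_start}^⊥` is invariant under
the search operator `S ∘ C ∘ O_m` for every `m`. -/
theorem walk_fixed_orthogonal_invariant
    (G : SimpleGraph V) [DecidableRel G.Adj]
    (hconn : G.Connected) (hE : 0 < G.edgeFinset.card)
    (f : V → V → ℂ)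
    (hfix : ∀ ⦃j i : V⦄, G.Adj j i → shiftOp (groverCoin G f) j i = f j i)
    (horth : walkInner G (psiStart G) f = 0) :
    ∀ m : V, walkInner G (targetState G m) f = 0 ∧
      ∀ ⦃j i : V⦄, G.Adj j i →
        shiftOp (groverCoin G (oracleOp G m f)) j i = f j i := by
  intro m
  have htarget : walkInner G (targetState G m) f = 0 := by
    rw [walkInner_targetState, inflow_eq_zero_of_connected hconn hE hfix horth m, mul_zero]
  refine ⟨htarget, fun j i h => ?_⟩
  rw [oracleOp_eq_self htarget]
  exact hfix h
end
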